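/- arXiv:1710.03662 — 6 statements merged into one kernel-verified Lean document; each statement's English description precedes it below -/
import Mathlib

section
/- Let n ≥ 3 be an odd integer not divisible by 3 and let q be an odd prime. Then as p ranges over odd primes with q² < pⁿ, the fields K_{p,q} = Q(√(q² − pⁿ)) form an infinite family; that is, the set of square-free parts d of q² − pⁿ obtained in this way is infinite. -/
/-- **Theorem 2, second part.**  Let `n ≥ 3` be an odd integer not divisible by `3` and `q` an
odd prime.  As `p` ranges over odd primes distinct from `q` with `q² < pⁿ`, the fields
`K_{p,q} = ℚ(√(q² − pⁿ))` form an infinite family; i.e. the set of square-free parts `d`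
of `q² − pⁿ` obtained in this way is infinite. -/
theorem infinitely_many_fields
    (n : ℕ) (hn : 3 ≤ n) (hnodd : Odd n) (hn3 : ¬ 3 ∣ n)
    (q : ℕ) (hq : q.Prime) (hqodd : Odd q) :
    {d : ℤ | ∃ (p m : ℕ), p.Prime ∧ Odd p ∧ p ≠ q ∧ (q : ℤ) ^ 2 < (p : ℤ) ^ n ∧
      0 < m ∧ Squarefree d ∧ (q : ℤ) ^ 2 - (p : ℤ) ^ n = (m : ℤ) ^ 2 * d}.Infinite := by
  by_contra hfin
  rw [Set.not_infinite] at hfin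
  obtain ⟨c, hc⟩ := hfin.bddBelow
  haveI : NeZero n := ⟨by omega⟩
  -- `2` is a unit mod `n` since `n` is odd
  have h2n : Nat.Coprime 2 n :=
    Nat.prime_two.coprime_iff_not_dvd.mpr fun h =>
      (Nat.not_even_iff_odd.mpr hnodd) (even_iff_two_dvd.mpr h)
  have hunit2 : IsUnit ((2 : ℕ) : ZMod n) := (ZMod.isUnit_iff_coprime 2 n).mpr h2n
  -- choose a large prime `ℓ ≡ 2 (mod n)`
  obtain ⟨ℓ, hℓgt, hℓp, hℓmod⟩ :=
    Nat.forall_exists_prime_gt_and_eq_mod hunit2 (n + q + c.natAbs + 2)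
  have hℓ2 : 2 < ℓ := by omega
  have hℓmodeq : ℓ ≡ 2 [MOD n] := (ZMod.natCast_eq_natCast_iff ℓ 2 n).mp hℓmod
  have hndvd : n ∣ ℓ - 2 := (Nat.modEq_iff_dvd' (by omega)).mp hℓmodeq.symm
  haveI : NeZero (ℓ ^ 2) := ⟨pow_ne_zero _ hℓp.pos.ne'⟩
  -- the `n`-th power map is bijective on units mod `ℓ²`
  have hcard : Nat.card (ZMod (ℓ ^ 2))ˣ = ℓ * (ℓ - 1) := by
    rw [Nat.card_eq_fintype_card, ZMod.card_units_eq_totient,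
      Nat.totient_prime_pow hℓp (by norm_num : 0 < 2)]
    norm_num
  have hK : (Nat.card (ZMod (ℓ ^ 2))ˣ).Coprime n := by
    rw [hcard]
    have h1 : Nat.Coprime ℓ n :=
      hℓp.coprime_iff_not_dvd.mpr fun h => by
        have := Nat.le_of_dvd (by omega) h; omega
    have h2 : Nat.Coprime (ℓ - 1) n := by
      have hg1 : Nat.gcd (ℓ - 1) n ∣ ℓ - 1 := Nat.gcd_dvd_left _ _
      have hg2 : Nat.gcd (ℓ - 1) n ∣ ℓ - 2 := (Nat.gcd_dvd_right _ _).trans hndvd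
      have := Nat.dvd_sub hg1 hg2
      have h12 : ℓ - 1 - (ℓ - 2) = 1 := by omega
      rw [h12] at this
      exact Nat.eq_one_of_dvd_one this
    exact Nat.coprime_mul_iff_left.mpr ⟨h1, h2⟩
  -- `q² + ℓ` is a unit mod `ℓ²`
  have hqℓ : Nat.Coprime (q ^ 2 + ℓ) (ℓ ^ 2) := by
    refine Nat.Coprime.pow_right 2 ?_
    rw [Nat.coprime_add_self_left]
    exact ((Nat.coprime_primes hq hℓp).mpr (by omega)).pow_left 2
  obtain ⟨u, hu⟩ := (ZMod.isUnit_iff_coprime (q ^ 2 + ℓ) (ℓ ^ 2)).mpr hqℓ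
  -- find a unit `a` with `a ^ n = u`
  obtain ⟨a, ha⟩ := (powCoprime hK).surjective u
  -- choose a large prime `p ≡ a (mod ℓ²)`
  obtain ⟨p, hpgt, hpp, hpmod⟩ :=
    Nat.forall_exists_prime_gt_and_eq_mod (a.isUnit) q
  have hq3 : 3 ≤ q := by
    rcases hqodd with ⟨k, hk⟩
    have := hq.two_le
    omega
  have hpodd : Odd p := hpp.odd_of_ne_two (by omega)
  have hqp : q < p := hpgt
  -- `q² < pⁿ`
  have hqpn : q ^ 2 < p ^ n := by
    calc q ^ 2 < p ^ 2 := Nat.pow_lt_pow_left hqp (by norm_num)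
    _ ≤ p ^ n := Nat.pow_le_pow_right hpp.pos (by omega)
  -- `pⁿ ≡ q² + ℓ (mod ℓ²)`
  have key : ((p ^ n : ℕ) : ZMod (ℓ ^ 2)) = ((q ^ 2 + ℓ : ℕ) : ZMod (ℓ ^ 2)) := by
    calc ((p ^ n : ℕ) : ZMod (ℓ ^ 2)) = ((p : ℕ) : ZMod (ℓ ^ 2)) ^ n := by push_cast; ring
    _ = ((a : ZMod (ℓ ^ 2))) ^ n := by rw [hpmod]
    _ = ((a ^ n : (ZMod (ℓ ^ 2))ˣ) : ZMod (ℓ ^ 2)) := (Units.val_pow_eq_pow_val a n).symm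
    _ = (u : ZMod (ℓ ^ 2)) := by rw [← ha]; simp [powCoprime]
    _ = _ := hu
  have hmod2 : p ^ n ≡ q ^ 2 + ℓ [MOD ℓ ^ 2] := (ZMod.natCast_eq_natCast_iff _ _ _).mp key
  have hdvdZ : ((ℓ : ℤ) ^ 2) ∣ ((q : ℤ) ^ 2 + ℓ) - (p : ℤ) ^ n := by
    have := hmod2.dvd
    push_cast at this ⊢
    convert this using 1 <;> ring
  -- the exact power of `ℓ` dividing `pⁿ - q²` is `1`
  have hℓdvd : (ℓ : ℤ) ∣ (p : ℤ) ^ n - (q : ℤ) ^ 2 := by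
    obtain ⟨k, hk⟩ := hdvdZ
    exact ⟨1 - ℓ * k, by linarith [hk]⟩
  have hℓ2ndvd : ¬ ((ℓ : ℤ) ^ 2 ∣ (p : ℤ) ^ n - (q : ℤ) ^ 2) := by
    intro h
    have : ((ℓ : ℤ) ^ 2) ∣ (ℓ : ℤ) := by
      have := dvd_add h hdvdZ
      have h2 : (p : ℤ) ^ n - (q : ℤ) ^ 2 + ((q : ℤ) ^ 2 + ℓ - (p : ℤ) ^ n) = (ℓ : ℤ) := by ring
      rwa [h2] at this
    have hle := Int.le_of_dvd (by exact_mod_cast hℓp.pos) this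
    have : (ℓ : ℤ) ^ 2 ≤ ℓ := hle
    nlinarith [show (2 : ℤ) < ℓ from by exact_mod_cast hℓ2]
  -- decompose `pⁿ - q²` into square times squarefree
  have hNpos : 0 < p ^ n - q ^ 2 := by omega
  obtain ⟨A, B, hA, hB, hAB, hAsf⟩ := Nat.sq_mul_squarefree_of_pos hNpos
  have hcast : ((B : ℤ)) ^ 2 * (A : ℤ) = (p : ℤ) ^ n - (q : ℤ) ^ 2 := by
    have := congrArg (fun x : ℕ => (x : ℤ)) hAB
    push_cast [Nat.cast_sub hqpn.le] at this
    push_cast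
    linarith [this]
  -- `ℓ ∣ A`
  have hℓZp : Prime (ℓ : ℤ) := Nat.prime_iff_prime_int.mp hℓp
  have hℓA : (ℓ : ℤ) ∣ (A : ℤ) := by
    have hd : (ℓ : ℤ) ∣ (B : ℤ) ^ 2 * A := by rw [hcast]; exact hℓdvd
    rcases hℓZp.dvd_mul.mp hd with h | h
    · exfalso
      have hB' : (ℓ : ℤ) ∣ (B : ℤ) := hℓZp.dvd_of_dvd_pow h
      have : (ℓ : ℤ) ^ 2 ∣ (B : ℤ) ^ 2 := pow_dvd_pow_of_dvd hB' 2
      exact hℓ2ndvd (by rw [← hcast]; exact this.mul_right _)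
    · exact h
  -- the squarefree part `d = -A` lies in the set and is `< c`, contradiction
  set d : ℤ := -(A : ℤ) with hd
  have hdmem : d ∈ {d : ℤ | ∃ (p m : ℕ), p.Prime ∧ Odd p ∧ p ≠ q ∧
      (q : ℤ) ^ 2 < (p : ℤ) ^ n ∧ 0 < m ∧ Squarefree d ∧
      (q : ℤ) ^ 2 - (p : ℤ) ^ n = (m : ℤ) ^ 2 * d} := by
    refine ⟨p, B, hpp, hpodd, by omega, by exact_mod_cast hqpn, hB, ?_, by rw [hd]; linarith [hcast]⟩
    rw [hd, ← Int.squarefree_natAbs]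
    simpa using hAsf
  have hdlt : d < c := by
    have hℓA' : (ℓ : ℤ) ≤ (A : ℤ) := Int.le_of_dvd (by exact_mod_cast hA) hℓA
    have : (c.natAbs : ℤ) < ℓ := by exact_mod_cast (by omega : c.natAbs < ℓ)
    have hcabs : -c ≤ (c.natAbs : ℤ) := by
      rw [← Int.abs_eq_natAbs]; exact neg_le_abs c
    rw [hd]; linarith
  exact absurd (hc hdmem) (not_le.mpr hdlt)
end

section
/- Let d ≡ 5 (mod 8) be an integer, let ℓ be a prime, and let a, b be odd integers. Then ((a + b√d)/2)^ℓ lies in ℤ[√d] if and only if ℓ = 3. -/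
private lemma zmod2_of_emod_zero {m : ℤ} (h : m % 2 = 0) : (m : ZMod 2) = 0 :=
  (ZMod.intCast_zmod_eq_zero_iff_dvd m 2).2 (by omega)

private lemma zmod2_of_emod_one {m : ℤ} (h : m % 2 = 1) : (m : ZMod 2) = 1 := by
  have h2 : ((m - 1 : ℤ) : ZMod 2) = 0 := zmod2_of_emod_zero (by omega)
  push_cast at h2
  linear_combination h2

private lemma emod_zero_of_zmod {m : ℤ} (h : (m : ZMod 2) = 0) : m % 2 = 0 := by
  rcases Int.emod_two_eq m with h0 | h1
  · exact h0
  · have h' := zmod2_of_emod_one h1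
    rw [h] at h'
    exact absurd h' (by decide)

private lemma emod_one_of_zmod {m : ℤ} (h : (m : ZMod 2) = 1) : m % 2 = 1 := by
  rcases Int.emod_two_eq m with h0 | h1
  · have h' := zmod2_of_emod_zero h0
    rw [h] at h'
    exact absurd h' (by decide)
  · exact h1

private lemma sq_emod_eight (m : ℤ) : m ^ 2 % 8 = 0 ∨ m ^ 2 % 8 = 1 ∨ m ^ 2 % 8 = 4 := by
  have h : m ^ 2 % 8 = (m % 8) ^ 2 % 8 := by rw [sq, Int.mul_emod, ← sq]
  have h1 : 0 ≤ m % 8 := Int.emod_nonneg m (by norm_num)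
  have h2 : m % 8 < 8 := Int.emod_lt_of_pos m (by norm_num)
  interval_cases h3 : m % 8 <;> simp_all

private lemma odd_sq_emod_eight {k : ℤ} (hk : k % 2 = 1) : k ^ 2 % 8 = 1 := by
  obtain ⟨j, hj⟩ : ∃ j, k = 2 * j + 1 := ⟨k / 2, by omega⟩
  obtain ⟨i, hi⟩ : ∃ i, j * (j + 1) = 2 * i := (Int.even_mul_succ_self j).elim
    (fun i hi => ⟨i, by omega⟩)
  have h2 : k ^ 2 = 8 * i + 1 := by rw [hj]; nlinarith [hi]
  omega

/-- Key induction: powers of `s + tω` with `ω² = ω + c`, `c, t` odd. -/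
private lemma pow_form (c : ℤ) (hc : c % 2 = 1) (ω : ℂ) (hω : ω ^ 2 = ω + (c : ℂ))
    (s t : ℤ) (ht : t % 2 = 1) (n : ℕ) :
    ∃ S T : ℤ, ((s : ℂ) + (t : ℂ) * ω) ^ n = (S : ℂ) + (T : ℂ) * ω ∧
      ((n % 3 = 0 ∧ T % 2 = 0 ∧ S % 2 = 1) ∨
       (n % 3 = 1 ∧ T % 2 = 1 ∧ S % 2 = s % 2) ∨
       (n % 3 = 2 ∧ T % 2 = 1 ∧ S % 2 = (s + 1) % 2)) := by
  induction n with
  | zero =>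
    exact ⟨1, 0, by push_cast; ring, Or.inl ⟨rfl, rfl, rfl⟩⟩
  | succ n ih =>
    obtain ⟨S, T, hST, hcase⟩ := ih
    refine ⟨S * s + T * t * c, S * t + T * s + T * t, ?_, ?_⟩
    · rw [pow_succ, hST]
      push_cast
      linear_combination ((T : ℂ) * t) * hω
    · have hcz := zmod2_of_emod_one hc
      have htz := zmod2_of_emod_one ht
      rcases Int.emod_two_eq s with hs | hs
      · have hsz := zmod2_of_emod_zero hs
        rcases hcase with ⟨h3, hT, hS⟩ | ⟨h3, hT, hS⟩ | ⟨h3, hT, hS⟩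
        · have hTz := zmod2_of_emod_zero hT
          have hSz := zmod2_of_emod_one hS
          have e1 : (S * t + T * s + T * t) % 2 = 1 := emod_one_of_zmod
            (by push_cast; rw [hSz, hTz, hsz, htz]; decide)
          have e2 : (S * s + T * t * c) % 2 = 0 := emod_zero_of_zmod
            (by push_cast; rw [hSz, hTz, hsz, htz, hcz]; decide)
          omega
        · have hTz := zmod2_of_emod_one hT
          have hSz := zmod2_of_emod_zero (by omega : S % 2 = 0)
          have e1 : (S * t + T * s + T * t) % 2 = 1 := emod_one_of_zmod
            (by push_cast; rw [hSz, hTz, hsz, htz]; decide)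
          have e2 : (S * s + T * t * c) % 2 = 1 := emod_one_of_zmod
            (by push_cast; rw [hSz, hTz, hsz, htz, hcz]; decide)
          omega
        · have hTz := zmod2_of_emod_one hT
          have hSz := zmod2_of_emod_one (by omega : S % 2 = 1)
          have e1 : (S * t + T * s + T * t) % 2 = 0 := emod_zero_of_zmod
            (by push_cast; rw [hSz, hTz, hsz, htz]; decide)
          have e2 : (S * s + T * t * c) % 2 = 1 := emod_one_of_zmod
            (by push_cast; rw [hSz, hTz, hsz, htz, hcz]; decide)
          omega
      · have hsz := zmod2_of_emod_one hs
        rcases hcase with ⟨h3, hT, hS⟩ | ⟨h3, hT, hS⟩ | ⟨h3, hT, hS⟩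
        · have hTz := zmod2_of_emod_zero hT
          have hSz := zmod2_of_emod_one hS
          have e1 : (S * t + T * s + T * t) % 2 = 1 := emod_one_of_zmod
            (by push_cast; rw [hSz, hTz, hsz, htz]; decide)
          have e2 : (S * s + T * t * c) % 2 = 1 := emod_one_of_zmod
            (by push_cast; rw [hSz, hTz, hsz, htz, hcz]; decide)
          omega
        · have hTz := zmod2_of_emod_one hT
          have hSz := zmod2_of_emod_one (by omega : S % 2 = 1)
          have e1 : (S * t + T * s + T * t) % 2 = 1 := emod_one_of_zmod
            (by push_cast; rw [hSz, hTz, hsz, htz]; decide)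
          have e2 : (S * s + T * t * c) % 2 = 0 := emod_zero_of_zmod
            (by push_cast; rw [hSz, hTz, hsz, htz, hcz]; decide)
          omega
        · have hTz := zmod2_of_emod_one hT
          have hSz := zmod2_of_emod_zero (by omega : S % 2 = 0)
          have e1 : (S * t + T * s + T * t) % 2 = 0 := emod_zero_of_zmod
            (by push_cast; rw [hSz, hTz, hsz, htz]; decide)
          have e2 : (S * s + T * t * c) % 2 = 1 := emod_one_of_zmod
            (by push_cast; rw [hSz, hTz, hsz, htz, hcz]; decide)
          omega

/-- **Proposition 1.**  Let `d ≡ 5 (mod 8)` be an integer, `ℓ` a prime, and `a, b` odd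
integers.  Fixing a square root `x` of `d` in `ℂ`, the element `((a + b√d)/2)^ℓ` lies in
`ℤ[√d] = {u + v√d : u, v ∈ ℤ}` if and only if `ℓ = 3`. -/
theorem half_integer_power_integral_iff_three
    (d : ℤ) (hd : d % 8 = 5) (ℓ : ℕ) (hℓ : ℓ.Prime)
    (a b : ℤ) (ha : Odd a) (hb : Odd b)
    (x : ℂ) (hx : x ^ 2 = (d : ℂ)) :
    (∃ u v : ℤ, (((a : ℂ) + (b : ℂ) * x) / 2) ^ ℓ = (u : ℂ) + (v : ℂ) * x) ↔ ℓ = 3 := by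
  obtain ⟨a', ha'⟩ := ha
  obtain ⟨b', hb'⟩ := hb
  -- set up ω = (1 + x)/2 with ω² = ω + c, c = (d-1)/4 odd
  set ω : ℂ := (1 + x) / 2 with hωdef
  set c : ℤ := (d - 1) / 4 with hcdef
  have hc4 : 4 * c = d - 1 := by omega
  have hc : c % 2 = 1 := by omega
  have hc4' : (4 : ℂ) * (c : ℂ) = (d : ℂ) - 1 := by exact_mod_cast congrArg (Int.cast : ℤ → ℂ) hc4
  have hω : ω ^ 2 = ω + (c : ℂ) := by
    rw [hωdef]
    linear_combination (1/4 : ℂ) * hx - (1/4 : ℂ) * hc4'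
  -- α = s + t ω with s = (a-b)/2, t = b
  set s : ℤ := (a - b) / 2 with hsdef
  have hs2 : 2 * s = a - b := by omega
  have hs2' : (2 : ℂ) * (s : ℂ) = (a : ℂ) - b := by exact_mod_cast congrArg (Int.cast : ℤ → ℂ) hs2
  have hα : ((a : ℂ) + (b : ℂ) * x) / 2 = (s : ℂ) + (b : ℂ) * ω := by
    rw [hωdef]
    linear_combination (-(1/2) : ℂ) * hs2'
  have ht : b % 2 = 1 := by omega
  obtain ⟨S, T, hST, hcase⟩ := pow_form c hc ω hω s b ht ℓ
  rw [hα]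
  constructor
  · rintro ⟨u, v, huv⟩
    by_contra hne
    -- then 3 ∤ ℓ, so T is odd
    have h3 : ℓ % 3 ≠ 0 := by
      intro h0
      have hdvd : 3 ∣ ℓ := by omega
      rcases (Nat.Prime.eq_one_or_self_of_dvd hℓ 3 hdvd) with h | h
      · omega
      · exact hne h.symm
    have hT : T % 2 = 1 := by rcases hcase with ⟨h, hT, _⟩ | ⟨_, hT, _⟩ | ⟨_, hT, _⟩ <;> omega
    rw [hST] at huv
    -- (2v - T) x = 2S + T - 2u  with 2v - T odd
    have hkx : ((2 * v - T : ℤ) : ℂ) * x = ((2 * S + T - 2 * u : ℤ) : ℂ) := by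
      push_cast
      rw [hωdef] at huv
      linear_combination 2 * huv.symm
    have hsq : ((2 * v - T : ℤ) : ℂ) ^ 2 * (d : ℂ) = ((2 * S + T - 2 * u : ℤ) : ℂ) ^ 2 := by
      linear_combination (((2 * v - T : ℤ) : ℂ) * x + ((2 * S + T - 2 * u : ℤ) : ℂ)) * hkx
        - ((2 * v - T : ℤ) : ℂ) ^ 2 * hx
    have hsqZ : (2 * v - T) ^ 2 * d = (2 * S + T - 2 * u) ^ 2 := by exact_mod_cast hsq
    have hodd : (2 * v - T) % 2 = 1 := by omega
    have h1 := odd_sq_emod_eight hodd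
    have h2 := sq_emod_eight (2 * S + T - 2 * u)
    -- (2v-T)^2 = 8i+1, so LHS % 8 = 5
    obtain ⟨i, hi⟩ : ∃ i, (2 * v - T) ^ 2 = 8 * i + 1 := ⟨(2 * v - T) ^ 2 / 8, by omega⟩
    obtain ⟨q, hq⟩ : ∃ q, d = 8 * q + 5 := ⟨d / 8, by omega⟩
    have : (2 * S + T - 2 * u) ^ 2 = 8 * (8 * i * q + 5 * i + q) + 5 := by
      rw [← hsqZ, hi, hq]; ring
    omega
  · rintro rfl
    have hT : T % 2 = 0 := by rcases hcase with ⟨_, hT, _⟩ | ⟨h, _, _⟩ | ⟨h, _, _⟩ <;> omega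
    obtain ⟨k, hk⟩ : ∃ k, T = 2 * k := ⟨T / 2, by omega⟩
    refine ⟨S + k, k, ?_⟩
    rw [hST, hωdef, hk]
    push_cast
    ring
end

section
/- There are no odd primes p and q and positive integer r such that 4q² = 3p^r + 1; equivalently, the equation (2q − 1)(2q + 1) = 3p^r has no solutions with q an odd prime, p an odd prime, and r ≥ 1. -/
/-- There are no odd primes `p`, `q` and positive integer `r` with `4q² = 3pʳ + 1`
(equivalently, `(2q − 1)(2q + 1) = 3pʳ` has no such solutions). -/
theorem no_solution_four_q_sq_eq_three_p_pow_add_one :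
    ¬ ∃ (p q r : ℕ), p.Prime ∧ Odd p ∧ q.Prime ∧ Odd q ∧ 1 ≤ r ∧
      4 * q ^ 2 = 3 * p ^ r + 1 := by
  rintro ⟨p, q, r, hp, hpo, hq, hqo, hr, heq⟩
  obtain ⟨k, hk⟩ := hqo
  have hq2 := hq.two_le
  have hq3 : 3 ≤ q := by omega
  obtain ⟨m, hm⟩ := hpo
  have hp2 := hp.two_le
  have hp3 : 3 ≤ p := by omega
  set a := 2 * q - 1 with ha'
  set b := 2 * q + 1 with hb'
  have ha : a + 1 = 2 * q := by omega
  have hb : b = a + 2 := by omega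
  have hab' : a * b + 1 = 4 * q ^ 2 := by nlinarith [ha, hb]
  have hab : a * b = 3 * p ^ r := by linarith
  have hprpos : 0 < p ^ r := pow_pos (by omega) r
  have hdvd : p ^ r ∣ a * b := ⟨3, by linarith⟩
  have hnot2 : ¬ (p ∣ a ∧ p ∣ b) := by
    rintro ⟨h1, h2⟩
    have h3 : p ∣ b - a := Nat.dvd_sub h2 h1
    have h4 : b - a = 2 := by omega
    rw [h4] at h3
    have := Nat.le_of_dvd (by norm_num) h3
    omega
  have hpr : p ^ r ∣ a ∨ p ^ r ∣ b := by
    by_cases h : p ∣ a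
    · left
      exact hp.prime.pow_dvd_of_dvd_mul_right r (fun h2 => hnot2 ⟨h, h2⟩) hdvd
    · right
      exact hp.prime.pow_dvd_of_dvd_mul_left r h hdvd
  rcases hpr with ⟨c, hc⟩ | ⟨c, hc⟩
  · -- a = p^r * c, so c * b = 3, b ≤ 3, contradiction
    have hcb : c * b = 3 := by
      have : p ^ r * (c * b) = p ^ r * 3 := by rw [← mul_assoc, ← hc]; linarith
      exact Nat.eq_of_mul_eq_mul_left hprpos this
    have : b ≤ 3 := Nat.le_of_dvd (by norm_num) ⟨c, by linarith [hcb, mul_comm c b]⟩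
    omega
  · have hcb : c * a = 3 := by
      have : p ^ r * (c * a) = p ^ r * 3 := by
        rw [← mul_assoc, ← hc]; nlinarith [hab, mul_comm a b]
      exact Nat.eq_of_mul_eq_mul_left hprpos this
    have : a ≤ 3 := Nat.le_of_dvd (by norm_num) ⟨c, by linarith [hcb, mul_comm c a]⟩
    omega
end

section
/- Let n ≥ 3 be an odd integer and let p, q be distinct odd primes with q² < pⁿ. Let d be the square-free part of q² − pⁿ. If q ≢ ±1 (mod |d|), then d < −3; in particular the only units of the ring of integers of Q(√d) are ±1. -/
/-!
If `-3 ≤ d < 0`, then `q ≢ ±1 (mod |d|)` is impossible for `d = -1, -2` (`q` is odd) and for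
`d = -3` forces `q = 3`; then `3 ∣ pⁿ`, so `p = 3 = q`. Hence `d < -3`.

For the units, write `u = a + b x` with `a, b ∈ ℚ` and fix a complex embedding `φ`. As `d < 0`,
`conj (φ x) = -φ x`, so `φ u * conj (φ u) = a² - d b²` and `φ u + conj (φ u) = 2a` are
rational algebraic integers, hence integers; the same holds for `u⁻¹`, so `a² - d b² = 1`.
If `b ≠ 0`, squarefreeness of `d` rules out `a² - d b² = 1` with `2a ∈ ℤ` once `d < -3`.
-/

open NumberField ComplexConjugate

theorem eq_neg_three_and_three_dvd_of_not_modEq {q d : ℤ} (hq : Odd q) (hd : -3 ≤ d)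
    (hd0 : d < 0) (h1 : ¬ q ≡ 1 [ZMOD |d|]) (h1' : ¬ q ≡ -1 [ZMOD |d|]) :
    d = -3 ∧ 3 ∣ q := by
  obtain ⟨k, rfl⟩ := hq
  interval_cases d <;> simp only [Int.ModEq, abs_neg, abs_one, Nat.abs_ofNat] at h1 h1' <;> omega

theorem lt_neg_three_of_not_modEq {n p q : ℕ} {m d : ℤ} (hp : p.Prime) (hq : q.Prime)
    (hqodd : Odd q) (hpq : p ≠ q) (hd0 : d < 0) (hfac : (q : ℤ) ^ 2 - (p : ℤ) ^ n = m ^ 2 * d)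
    (h1 : ¬ (q : ℤ) ≡ 1 [ZMOD |d|]) (h1' : ¬ (q : ℤ) ≡ -1 [ZMOD |d|]) : d < -3 := by
  by_contra! hd
  obtain ⟨rfl, h3q⟩ := eq_neg_three_and_three_dvd_of_not_modEq hqodd.natCast hd hd0 h1 h1'
  have hq3 : q = 3 :=
    ((Nat.prime_dvd_prime_iff_eq Nat.prime_three hq).mp (by exact_mod_cast h3q)).symm
  subst hq3
  have h3p : (3 : ℤ) ∣ (p : ℤ) ^ n := ⟨3 + m ^ 2, by push_cast at hfac; linarith⟩
  have h3p' : (3 : ℕ) ∣ p := by exact_mod_cast Int.prime_three.dvd_of_dvd_pow h3p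
  exact hpq ((Nat.prime_dvd_prime_iff_eq Nat.prime_three hp).mp h3p').symm

theorem Squarefree.dvd_of_mul_eq_sq {R : Type*} [CommMonoidWithZero R]
    [IsCancelMulZero R] [DecompositionMonoid R] [Nontrivial R] {D N k : R} (hD : Squarefree D)
    (h : D * N = k ^ 2) : D ∣ N := by
  obtain ⟨e, rfl⟩ := (hD.dvd_pow_iff_dvd two_ne_zero).mp ⟨N, h.symm⟩
  exact ⟨e ^ 2, mul_left_cancel₀ hD.ne_zero (by rw [h, mul_pow, sq D, mul_assoc])⟩

theorem Rat.exists_intCast_eq_of_isIntegral {L : Type*} [Field L] [CharZero L] {r : ℚ}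
    (h : IsIntegral ℤ (r : L)) : ∃ k : ℤ, (k : ℚ) = r := by
  rw [← eq_ratCast (algebraMap ℚ L), isIntegral_algebraMap_iff (algebraMap ℚ L).injective]
    at h
  simpa using IsIntegrallyClosed.isIntegral_iff.mp h

theorem Complex.conj_eq_neg_of_sq_eq {c : ℂ} {r : ℝ} (hr : r < 0) (hc : c ^ 2 = r) :
    conj c = -c := by
  have hsq : conj c ^ 2 = c ^ 2 := by rw [← map_pow, hc, Complex.conj_ofReal]
  refine (sq_eq_sq_iff_eq_or_eq_neg.mp hsq).resolve_left fun h ↦ ?_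
  obtain ⟨s, rfl⟩ := Complex.conj_eq_iff_real.mp h
  have : s ^ 2 = r := by exact_mod_cast hc
  nlinarith [sq_nonneg s]

theorem exists_algebraMap_add_algebraMap_mul_eq {F K : Type*} [Field F] [Field K] [Algebra F K]
    (hK : Module.finrank F K = 2) {x : K} (hx : x ∉ Set.range (algebraMap F K)) (z : K) :
    ∃ a b : F, algebraMap F K a + algebraMap F K b * x = z := by
  have hli : LinearIndependent F ![(1 : K), x] := by
    refine (LinearIndependent.pair_iff' one_ne_zero).mpr fun a ha ↦ hx ⟨a, ?_⟩
    rwa [Algebra.smul_def, mul_one] at ha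
  have hspan : Submodule.span F {(1 : K), x} = ⊤ := by
    have : Module.Finite F K := Module.finite_of_finrank_pos (by omega)
    have := hli.span_eq_top_of_card_eq_finrank' (by simp [hK])
    simpa [Matrix.range_cons, Set.pair_comm] using this
  obtain ⟨a, b, hab⟩ := Submodule.mem_span_pair.mp (hspan ▸ Submodule.mem_top : z ∈ _)
  exact ⟨a, b, by rwa [Algebra.smul_def, Algebra.smul_def, mul_one] at hab⟩

section ImaginaryQuadratic

variable {K : Type*} [Field K] {d : ℤ} {x : K}

theorem conj_map_eq_neg_of_sq_eq (hd : d < 0) (hx : x ^ 2 = d) (φ : K →+* ℂ) :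
    conj (φ x) = -φ x :=
  Complex.conj_eq_neg_of_sq_eq (r := d) (by exact_mod_cast hd) (by rw [← map_pow, hx]; simp)

theorem map_mul_conj_map_ratCast_add_mul (hd : d < 0) (hx : x ^ 2 = d) (φ : K →+* ℂ)
    (a b : ℚ) :
    φ (a + b * x) * conj (φ (a + b * x)) = ((a ^ 2 - d * b ^ 2 : ℚ) : ℂ) := by
  have hc : φ x ^ 2 = d := by rw [← map_pow, hx, map_intCast]
  simp only [map_add, map_mul, map_ratCast, conj_map_eq_neg_of_sq_eq hd hx]
  push_cast
  linear_combination (-(b : ℂ) ^ 2) * hc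

theorem map_add_conj_map_ratCast_add_mul (hd : d < 0) (hx : x ^ 2 = d) (φ : K →+* ℂ)
    (a b : ℚ) :
    φ (a + b * x) + conj (φ (a + b * x)) = ((2 * a : ℚ) : ℂ) := by
  simp only [map_add, map_mul, map_ratCast, conj_map_eq_neg_of_sq_eq hd hx]
  push_cast
  ring

theorem exists_intCast_eq_two_mul_of_isIntegral (hd : d < 0) (hx : x ^ 2 = d) (φ : K →+* ℂ)
    {a b : ℚ} (hz : IsIntegral ℤ ((a : K) + b * x)) : ∃ t : ℤ, (t : ℚ) = 2 * a := by
  have hφ := hz.map φ.toIntAlgHom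
  refine Rat.exists_intCast_eq_of_isIntegral (L := ℂ) ?_
  rw [← map_add_conj_map_ratCast_add_mul hd hx φ]
  exact hφ.add (hφ.map (starRingEnd ℂ).toIntAlgHom)

theorem sq_sub_mul_sq_eq_one_of_unit (hd : d < 0) (hx : x ^ 2 = d) (φ : K →+* ℂ)
    (u : (𝓞 K)ˣ) {a b : ℚ} (hu : ((u : 𝓞 K) : K) = a + b * x) : a ^ 2 - d * b ^ 2 = 1 := by
  set N : ℚ := a ^ 2 - d * b ^ 2
  set w : ℂ := φ ((u⁻¹ : (𝓞 K)ˣ) : 𝓞 K)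
  have hNw : (N : ℂ) * (w * conj w) = 1 := by
    have huw : φ ((u : 𝓞 K) : K) * w = 1 := by
      rw [← map_mul, ← map_mul, Units.mul_inv, map_one, map_one]
    rw [← map_mul_conj_map_ratCast_add_mul hd hx φ, ← hu]
    calc _ = (φ ((u : 𝓞 K) : K) * w) * conj (φ ((u : 𝓞 K) : K) * w) := by rw [map_mul]; ring
      _ = 1 := by rw [huw, map_one, one_mul]
  have hw : w * conj w = ((N⁻¹ : ℚ) : ℂ) := by
    rw [Rat.cast_inv]; exact (eq_inv_of_mul_eq_one_right hNw)
  have hint (v : 𝓞 K) : IsIntegral ℤ (φ v * conj (φ v)) :=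
    have hφ := (RingOfIntegers.isIntegral_coe v).map φ.toIntAlgHom
    hφ.mul (hφ.map (starRingEnd ℂ).toIntAlgHom)
  obtain ⟨k, hk⟩ := Rat.exists_intCast_eq_of_isIntegral (L := ℂ)
    (map_mul_conj_map_ratCast_add_mul hd hx φ a b ▸ hu ▸ hint u)
  obtain ⟨k', hk'⟩ := Rat.exists_intCast_eq_of_isIntegral (L := ℂ) (hw ▸ hint _)
  have hN0 : N ≠ 0 := by rintro h; simp [h] at hNw
  have hkk' : k * k' = 1 := by
    have : (k * k' : ℚ) = 1 := by rw [hk, hk']; exact mul_inv_cancel₀ hN0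
    exact_mod_cast this
  have hk0 : 0 ≤ k := by
    have hdQ : (d : ℚ) < 0 := by exact_mod_cast hd
    have : (0 : ℚ) ≤ k := by rw [hk]; nlinarith [sq_nonneg a, sq_nonneg b]
    exact_mod_cast this
  exact hk.symm.trans (by rw [Int.eq_one_of_mul_eq_one_right hk0 hkk', Int.cast_one])

end ImaginaryQuadratic

theorem eq_zero_of_sq_sub_mul_sq_eq_one {d : ℤ} (hdsf : Squarefree d) (hd : d < -3) {a b : ℚ}
    (ht : ∃ t : ℤ, (t : ℚ) = 2 * a) (h : a ^ 2 - d * b ^ 2 = 1) : b = 0 := by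
  by_contra hb
  obtain ⟨t, ht⟩ := ht
  have hd5 : d ≤ -5 := by
    have : d ≠ -4 := by
      rintro rfl
      exact absurd (hdsf 2 ⟨-1, by norm_num⟩) (by norm_num [Int.isUnit_iff])
    omega
  have hdQ : (d : ℚ) < 0 := by exact_mod_cast (show d < 0 by omega)
  have ht4 : t ^ 2 < 4 := by
    have : 0 < b ^ 2 := by positivity
    have : (t : ℚ) ^ 2 < 4 := by rw [ht]; nlinarith
    exact_mod_cast this
  -- `(2db)² = -d (4 - t²)` forces `d ∣ 4 - t²`, but `0 < 4 - t² < -d`.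
  obtain ⟨k, hk⟩ : IsSquare (d * (t ^ 2 - 4)) := by
    rw [← Rat.isSquare_intCast_iff]
    refine ⟨d * (2 * b), ?_⟩
    push_cast
    rw [ht]
    linear_combination (4 * (d : ℚ)) * h
  have hdvd : -d ∣ 4 - t ^ 2 := by
    rw [neg_dvd, ← dvd_neg, neg_sub]
    exact hdsf.dvd_of_mul_eq_sq (k := k) (by rw [hk, sq])
  have := Int.le_of_dvd (by nlinarith) hdvd
  nlinarith

theorem RingOfIntegers.units_eq_one_or_neg_one {K : Type*} [Field K] [NumberField K]
    (hK : Module.finrank ℚ K = 2) {d : ℤ} (hdsf : Squarefree d) (hd : d < -3) {x : K}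
    (hx : x ^ 2 = d) (u : (𝓞 K)ˣ) : (u : 𝓞 K) = 1 ∨ (u : 𝓞 K) = -1 := by
  obtain ⟨φ⟩ : Nonempty (K →+* ℂ) := inferInstance
  have hd0 : d < 0 := by omega
  have hirr : x ∉ Set.range (algebraMap ℚ K) := by
    rintro ⟨r, rfl⟩
    have : r ^ 2 = d := by exact_mod_cast (eq_ratCast (algebraMap ℚ K) r ▸ hx)
    nlinarith [sq_nonneg r, (by exact_mod_cast hd0 : (d : ℚ) < 0)]
  obtain ⟨a, b, hab⟩ := exists_algebraMap_add_algebraMap_mul_eq hK hirr ((u : 𝓞 K) : K)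
  simp only [eq_ratCast] at hab
  have hN := sq_sub_mul_sq_eq_one_of_unit hd0 hx φ u hab.symm
  have h2a := exists_intCast_eq_two_mul_of_isIntegral hd0 hx φ
    (by rw [hab]; exact RingOfIntegers.isIntegral_coe _)
  have hb := eq_zero_of_sq_sub_mul_sq_eq_one hdsf hd h2a hN
  subst hb
  have ha : a ^ 2 = 1 := by simpa using hN
  refine (sq_eq_one_iff.mp ha).imp (fun h ↦ ?_) (fun h ↦ ?_) <;>
    exact RingOfIntegers.coe_injective (by simp [← hab, h])

theorem d_lt_neg_three_and_units_general
    (n : ℕ)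
    (p q : ℕ) (hp : p.Prime) (hq : q.Prime) (hqodd : Odd q) (hpq : p ≠ q)
    (d : ℤ) (m : ℕ) (hdsf : Squarefree d) (hdneg : d < 0)
    (hfac : (q : ℤ) ^ 2 - (p : ℤ) ^ n = (m : ℤ) ^ 2 * d)
    (hq1 : ¬ (q : ℤ) ≡ 1 [ZMOD |d|]) (hq1' : ¬ (q : ℤ) ≡ -1 [ZMOD |d|])
    (K : Type) [Field K] [NumberField K]
    (x : K) (hx : x ^ 2 = (d : K)) (hdeg : Module.finrank ℚ K = 2) :
    d < -3 ∧ ∀ u : (𝓞 K)ˣ, (u : 𝓞 K) = 1 ∨ (u : 𝓞 K) = -1 := by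
  have hd := lt_neg_three_of_not_modEq hp hq hqodd hpq hdneg hfac hq1 hq1'
  exact ⟨hd, RingOfIntegers.units_eq_one_or_neg_one hdeg hdsf hd hx⟩

/-- Let `n ≥ 3` be odd and `p ≠ q` odd primes with `q² < pⁿ`, and let `d < 0` be the
square-free part of `q² − pⁿ`.  If `q ≢ ±1 (mod |d|)`, then `d < −3`; in particular the only
units of the ring of integers of `ℚ(√d)` are `±1`. -/
theorem d_lt_neg_three_and_units
    (n : ℕ) (hn : 3 ≤ n) (hnodd : Odd n)
    (p q : ℕ) (hp : p.Prime) (hq : q.Prime) (hpodd : Odd p) (hqodd : Odd q) (hpq : p ≠ q)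
    (hlt : (q : ℤ) ^ 2 < (p : ℤ) ^ n)
    (d : ℤ) (m : ℕ) (hm : 0 < m) (hdsf : Squarefree d) (hdneg : d < 0)
    (hfac : (q : ℤ) ^ 2 - (p : ℤ) ^ n = (m : ℤ) ^ 2 * d)
    (hq1 : ¬ (q : ℤ) ≡ 1 [ZMOD |d|]) (hq1' : ¬ (q : ℤ) ≡ -1 [ZMOD |d|])
    (K : Type) [Field K] [NumberField K]
    (x : K) (hx : x ^ 2 = (d : K)) (hdeg : Module.finrank ℚ K = 2) :
    d < -3 ∧ ∀ u : (𝓞 K)ˣ, (u : 𝓞 K) = 1 ∨ (u : 𝓞 K) = -1 :=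
  d_lt_neg_three_and_units_general n p q hp hq hqodd hpq d m hdsf hdneg hfac hq1 hq1' K x hx hdeg
end

section
/- Let n ≥ 3 be an odd integer and let p, q be distinct odd primes with q² < pⁿ. Let d be the square-free part of q² − pⁿ and m the positive integer with q² − pⁿ = m²d. Then in the ring of integers of Q(√d) there exists an integral ideal 𝔞 such that 𝔞ⁿ is the principal ideal generated by α = q + m√d. -/
open NumberField

/-- Let `n ≥ 3` be odd and `p ≠ q` odd primes with `q² < pⁿ`, and write `q² − pⁿ = m²d` with
`d < 0` square-free and `m > 0`.  Then in the ring of integers of `ℚ(√d)` there is an integral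
ideal `𝔞` with `𝔞ⁿ = (α)`, where `α = q + m√d`. -/
theorem exists_ideal_nth_power_eq_span_alpha
    (n : ℕ) (hn : 3 ≤ n) (hnodd : Odd n)
    (p q : ℕ) (hp : p.Prime) (hq : q.Prime) (hpodd : Odd p) (hqodd : Odd q) (hpq : p ≠ q)
    (hlt : (q : ℤ) ^ 2 < (p : ℤ) ^ n)
    (d : ℤ) (m : ℕ) (hm : 0 < m) (hdsf : Squarefree d) (hdneg : d < 0)
    (hfac : (q : ℤ) ^ 2 - (p : ℤ) ^ n = (m : ℤ) ^ 2 * d)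
    (K : Type) [Field K] [NumberField K]
    (x : K) (hx : x ^ 2 = (d : K)) (hdeg : Module.finrank ℚ K = 2) :
    ∃ (α : 𝓞 K) (𝔞 : Ideal (𝓞 K)),
      (α : K) = (q : K) + (m : K) * x ∧ 𝔞 ^ n = Ideal.span {α} := by
  -- x is an algebraic integer
  have hxint : IsIntegral ℤ x := by
    apply IsIntegral.of_pow (n := 2) (by norm_num)
    rw [hx, show ((d : ℤ) : K) = algebraMap ℤ K d by simp]
    exact isIntegral_algebraMap
  set y : 𝓞 K := ⟨x, hxint⟩ with hy
  set α : 𝓞 K := (q : 𝓞 K) + (m : 𝓞 K) * y with hα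
  set β : 𝓞 K := (q : 𝓞 K) - (m : 𝓞 K) * y with hβ
  have hyK : (y : K) = x := rfl
  have hαK : (α : K) = (q : K) + (m : K) * x := by
    push_cast [hα, hyK]
    ring
  have hβK : (β : K) = (q : K) - (m : K) * x := by
    push_cast [hβ, hyK]
    ring
  -- the norm relation
  have hZ : ((q : ℤ) ^ 2 - (m : ℤ) ^ 2 * d) = (p : ℤ) ^ n := by linarith
  have hKey : ((q : K) + (m : K) * x) * ((q : K) - (m : K) * x) = (p : K) ^ n := by
    have hK : ((q : K) ^ 2 - (m : K) ^ 2 * (d : K)) = (p : K) ^ n := by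
      exact_mod_cast congrArg (Int.cast : ℤ → K) hZ
    calc ((q : K) + (m : K) * x) * ((q : K) - (m : K) * x)
        = (q : K) ^ 2 - (m : K) ^ 2 * x ^ 2 := by ring
      _ = (p : K) ^ n := by rw [hx]; exact hK
  have hmul : α * β = (p : 𝓞 K) ^ n := by
    apply RingOfIntegers.ext
    push_cast [hαK, hβK]
    exact hKey
  have hsum : α + β = 2 * (q : 𝓞 K) := by rw [hα, hβ]; ring
  -- ideal norm relation
  have hspan : Ideal.span {α} * Ideal.span {β} = (Ideal.span {(p : 𝓞 K)}) ^ n := by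
    rw [Ideal.span_singleton_mul_span_singleton, hmul, Ideal.span_singleton_pow]
  -- coprimality of p^n and 2q in ℤ
  have hp2 : ¬ (p ∣ 2) := by
    intro h
    have hp2' := (Nat.prime_dvd_prime_iff_eq hp Nat.prime_two).mp h
    rw [hp2'] at hpodd
    simp [Nat.odd_iff] at hpodd
  have hcopN : Nat.Coprime (p ^ n) (2 * q) := by
    apply Nat.Coprime.pow_left
    exact Nat.Coprime.mul_right (hp.coprime_iff_not_dvd.mpr hp2)
      ((Nat.coprime_primes hp hq).mpr hpq)
  have hcopZ : IsCoprime ((p : ℤ) ^ n) ((2 * q : ℕ) : ℤ) := by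
    rw [← Nat.cast_pow]
    exact_mod_cast (Nat.isCoprime_iff_coprime.mpr hcopN)
  have hcopO : IsCoprime ((p : 𝓞 K) ^ n) ((2 * q : ℕ) : 𝓞 K) := by
    have := hcopZ.map (algebraMap ℤ (𝓞 K))
    simpa using this
  obtain ⟨u, v, huv⟩ := hcopO
  -- the two ideals are coprime
  have hsup : Ideal.span {α} ⊔ Ideal.span {β} = ⊤ := by
    rw [Ideal.eq_top_iff_one]
    have h1 : u * (α * β) + v * (α + β) = 1 := by
      rw [hmul, hsum]
      convert huv using 3
      push_cast
      ring
    rw [← h1]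
    apply Ideal.add_mem
    · exact Ideal.mul_mem_left _ _ (Ideal.mem_sup_left
        (Ideal.mul_mem_right _ _ (Ideal.subset_span rfl)))
    · exact Ideal.mul_mem_left _ _ (Ideal.add_mem _
        (Ideal.mem_sup_left (Ideal.subset_span rfl))
        (Ideal.mem_sup_right (Ideal.subset_span rfl)))
  have hgcd : IsUnit (gcd (Ideal.span {α}) (Ideal.span {β})) := by
    rw [Ideal.isUnit_iff, Ideal.gcd_eq_sup, hsup]
  obtain ⟨𝔞, h𝔞⟩ := exists_eq_pow_of_mul_eq_pow hgcd hspan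
  exact ⟨α, 𝔞, hαK, h𝔞.symm⟩
end

section
/- Let d < 0 be a square-free integer, let ℓ be an odd prime, let q be an odd prime and m a nonzero integer. If there exist an integer b and a sign a = ±1 with q + m√d = (a + b√d)^ℓ in ℤ[√d], then q ≡ ±1 (mod |d|). -/
/-- Let `d < 0` be square-free, `ℓ` an odd prime, `q` an odd prime and `m` a nonzero integer.
If `q + m√d = (a + b√d)^ℓ` holds in `ℤ[√d]` for some integer `b` and a sign `a = ±1`
(with `√d` a fixed square root of `d` in `ℂ`), then `q ≡ ±1 (mod |d|)`. -/
theorem q_congruent_pm_one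
    (d : ℤ) (hdneg : d < 0) (hdsf : Squarefree d)
    (ℓ : ℕ) (hℓ : ℓ.Prime) (hℓodd : Odd ℓ)
    (q : ℕ) (hq : q.Prime) (hqodd : Odd q) (m : ℤ) (hm : m ≠ 0)
    (x : ℂ) (hx : x ^ 2 = (d : ℂ))
    (a b : ℤ) (ha : a = 1 ∨ a = -1)
    (h : (q : ℂ) + (m : ℂ) * x = ((a : ℂ) + (b : ℂ) * x) ^ ℓ) :
    (q : ℤ) ≡ 1 [ZMOD |d|] ∨ (q : ℤ) ≡ -1 [ZMOD |d|] := by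
  have hxx : x * x = (d : ℂ) := by rw [← sq]; exact hx
  let f : ℤ√d →+* ℂ := Zsqrtd.lift ⟨x, hxx⟩
  set z : ℤ√d := ⟨a, b⟩ with hz
  have hfapp : ∀ w : ℤ√d, f w = (w.re : ℂ) + (w.im : ℂ) * x := by
    intro w; rfl
  have hfz : f z = (a : ℂ) + (b : ℂ) * x := by rw [hfapp]
  -- x has nonzero imaginary part
  have hxim : x.im ≠ 0 := by
    intro h0
    have : x = (x.re : ℂ) := by
      apply Complex.ext <;> simp [h0]
    rw [this] at hx
    have : ((x.re ^ 2 : ℝ) : ℂ) = ((d : ℝ) : ℂ) := by push_cast; push_cast at hx; exact hx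
    have h2 : (x.re : ℝ) ^ 2 = (d : ℝ) := by exact_mod_cast this
    nlinarith [sq_nonneg x.re, (show (d : ℝ) < 0 by exact_mod_cast hdneg)]
  -- compare real parts: q = (z^ℓ).re
  have heq : (q : ℂ) + (m : ℂ) * x = ((z ^ ℓ).re : ℂ) + ((z ^ ℓ).im : ℂ) * x := by
    rw [h, ← hfz, ← map_pow, hfapp]
  have him : (m : ℝ) = ((z ^ ℓ).im : ℝ) := by
    have h' := congrArg Complex.im heq
    simp [Complex.add_im, Complex.mul_im] at h'
    rcases h' with h' | h'
    · exact_mod_cast h'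
    · exact absurd h' hxim
  have hqre : (q : ℤ) = (z ^ ℓ).re := by
    have h' := congrArg Complex.re heq
    simp only [Complex.add_re, Complex.mul_re, Complex.intCast_re, Complex.intCast_im,
      Complex.natCast_re, Complex.natCast_im] at h'
    rw [him] at h'
    have := add_right_cancel h'
    exact_mod_cast this
  -- key divisibility : d ∣ (z^n).re - z.re^n
  have key : ∀ n : ℕ, d ∣ ((z ^ n).re - z.re ^ n) := by
    intro n
    induction n with
    | zero => simp
    | succ n ih =>
      have hmul : (z ^ (n + 1)).re = z.re * (z ^ n).re + d * (z.im * (z ^ n).im) := by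
        rw [pow_succ, mul_comm, Zsqrtd.re_mul]; ring
      have : (z ^ (n + 1)).re - z.re ^ (n + 1) =
          z.re * ((z ^ n).re - z.re ^ n) + d * (z.im * (z ^ n).im) := by
        rw [hmul]; ring
      rw [this]
      exact dvd_add (Dvd.dvd.mul_left ih _) (dvd_mul_right _ _)
  have hzre : z.re = a := rfl
  have haℓ : a ^ ℓ = a := by
    rcases ha with rfl | rfl
    · simp
    · simp [Odd.neg_one_pow hℓodd]
  have hdvd : d ∣ ((q : ℤ) - a) := by
    have := key ℓ
    rw [← hqre, hzre, haℓ] at this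
    exact this
  have habs : |d| ∣ (a - (q : ℤ)) := (abs_dvd _ _).mpr (by
    have := hdvd.neg_right; simpa using (dvd_neg.mpr hdvd))
  have hmod : (q : ℤ) ≡ a [ZMOD |d|] := (Int.modEq_iff_dvd).mpr habs
  rcases ha with rfl | rfl
  · exact Or.inl hmod
  · exact Or.inr hmod
end
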